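/- arXiv:1504.00330 — 3 statements merged into one kernel-verified Lean document; each statement's English description precedes it below -/
import Mathlib

section
/- Every Schwartz vector field X : ℝ³ → ℝ³ decomposes as X = X^{df} + X^{cf}, where X^{df} = (−Δ)⁻¹ curl curl X is divergence-free and X^{cf} = −(−Δ)⁻¹ ∇ div X is curl-free; i.e. div X^{df} = 0 and curl X^{cf} = 0, and the decomposition X = (−Δ)⁻¹ curl curl X − (−Δ)⁻¹ ∇ div X holds. -/
noncomputable section

/-- Partial derivative `∂ᵢ f` on `ℝ³`. -/
def pd (f : EuclideanSpace ℝ (Fin 3) → ℝ) (i : Fin 3) (x : EuclideanSpace ℝ (Fin 3)) : ℝ :=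
  fderiv ℝ f x (EuclideanSpace.single i 1)

/-- The curl of a vector field on `ℝ³` (given by its components). -/
def curl3 (F : Fin 3 → EuclideanSpace ℝ (Fin 3) → ℝ) :
    Fin 3 → EuclideanSpace ℝ (Fin 3) → ℝ :=
  ![fun x => pd (F 2) 1 x - pd (F 1) 2 x,
    fun x => pd (F 0) 2 x - pd (F 2) 0 x,
    fun x => pd (F 1) 0 x - pd (F 0) 1 x]

/-- The divergence of a vector field on `ℝ³`. -/
def div3 (F : Fin 3 → EuclideanSpace ℝ (Fin 3) → ℝ) (x : EuclideanSpace ℝ (Fin 3)) : ℝ :=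
  ∑ i : Fin 3, pd (F i) i x

abbrev E3 := EuclideanSpace ℝ (Fin 3)

lemma pd_contDiff {f : E3 → ℝ} (hf : ContDiff ℝ (⊤ : ℕ∞) f) (i : Fin 3) :
    ContDiff ℝ (⊤ : ℕ∞) (pd f i) := by
  have h1 : ContDiff ℝ (⊤ : ℕ∞) (fderiv ℝ f) := hf.fderiv_right (by simp)
  exact ((ContinuousLinearMap.apply ℝ ℝ (EuclideanSpace.single i 1)).contDiff).comp h1

lemma pd_diff {f : E3 → ℝ} (hf : ContDiff ℝ (⊤ : ℕ∞) f) (i : Fin 3) :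
    Differentiable ℝ (pd f i) := (pd_contDiff hf i).differentiable (by simp)

lemma pd_neg (g : E3 → ℝ) (i : Fin 3) (x : E3) :
    pd (fun y => -(g y)) i x = -pd g i x := by
  simp [pd, fderiv_neg]

lemma pd_sub {f g : E3 → ℝ} (hf : Differentiable ℝ f) (hg : Differentiable ℝ g)
    (i : Fin 3) (x : E3) :
    pd (fun y => f y - g y) i x = pd f i x - pd g i x := by
  simp [pd, fderiv_fun_sub (hf x) (hg x)]

lemma pd_add {f g : E3 → ℝ} (hf : Differentiable ℝ f) (hg : Differentiable ℝ g)
    (i : Fin 3) (x : E3) :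
    pd (fun y => f y + g y) i x = pd f i x + pd g i x := by
  simp [pd, fderiv_fun_add (hf x) (hg x)]

lemma pd_comm {f : E3 → ℝ} (hf : ContDiff ℝ (⊤ : ℕ∞) f) (i j : Fin 3) (x : E3) :
    pd (pd f i) j x = pd (pd f j) i x := by
  have hd : ∀ y, HasFDerivAt f (fderiv ℝ f y) y :=
    fun y => (hf.differentiable (by simp) y).hasFDerivAt
  have h2 : HasFDerivAt (fderiv ℝ f) (fderiv ℝ (fderiv ℝ f) x) x :=
    (((hf.fderiv_right (m := (⊤ : ℕ∞)) (by simp)).differentiable (by simp)) x).hasFDerivAt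
  have hsym := second_derivative_symmetric hd h2
  have key : ∀ a b : Fin 3, pd (pd f a) b x =
      fderiv ℝ (fderiv ℝ f) x (EuclideanSpace.single b 1) (EuclideanSpace.single a 1) := by
    intro a b
    unfold pd
    rw [fderiv_clm_apply (((hf.fderiv_right (m := (⊤ : ℕ∞)) (by simp)).differentiable (by simp)) x)
      (differentiableAt_const _)]
    simp
  rw [key, key, hsym]

/-- Helmholtz decomposition on `ℝ³`.  If `W = (−Δ)⁻¹X` (i.e. `−ΔW = X`
componentwise), then `X^{df} := curl curl W = (−Δ)⁻¹ curl curl X` is divergence-free,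
`X^{cf} := −∇ div W = −(−Δ)⁻¹∇ div X` is curl-free, and `X = X^{df} + X^{cf}`. -/
theorem stmt_6 (X W : Fin 3 → EuclideanSpace ℝ (Fin 3) → ℝ)
    (hX : ∀ i, ContDiff ℝ (⊤ : ℕ∞) (X i)) (hW : ∀ i, ContDiff ℝ (⊤ : ℕ∞) (W i))
    (hpois : ∀ i x, -(∑ j : Fin 3, pd (pd (W i) j) j x) = X i x) :
    (∀ i x, X i x = curl3 (curl3 W) i x + (-(pd (div3 W) i x))) ∧
    (∀ x, div3 (curl3 (curl3 W)) x = 0) ∧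
    (∀ k x, curl3 (fun i y => -(pd (div3 W) i y)) k x = 0) := by
  have hd : ∀ j k : Fin 3, Differentiable ℝ (pd (W j) k) := fun j k => pd_diff (hW j) k
  have c0 : curl3 W 0 = fun y => pd (W 2) 1 y - pd (W 1) 2 y := rfl
  have c1 : curl3 W 1 = fun y => pd (W 0) 2 y - pd (W 2) 0 y := rfl
  have c2 : curl3 W 2 = fun y => pd (W 1) 0 y - pd (W 0) 1 y := rfl
  have hcCD : ∀ j, ContDiff ℝ (⊤ : ℕ∞) (curl3 W j) := by
    intro j
    fin_cases j
    · show ContDiff ℝ (⊤ : ℕ∞) (curl3 W 0); rw [c0]; exact (pd_contDiff (hW 2) 1).sub (pd_contDiff (hW 1) 2)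
    · show ContDiff ℝ (⊤ : ℕ∞) (curl3 W 1); rw [c1]; exact (pd_contDiff (hW 0) 2).sub (pd_contDiff (hW 2) 0)
    · show ContDiff ℝ (⊤ : ℕ∞) (curl3 W 2); rw [c2]; exact (pd_contDiff (hW 1) 0).sub (pd_contDiff (hW 0) 1)
  have hcd : ∀ j k : Fin 3, Differentiable ℝ (pd (curl3 W j) k) :=
    fun j k => pd_diff (hcCD j) k
  have hdiveq : div3 W = fun y => pd (W 0) 0 y + pd (W 1) 1 y + pd (W 2) 2 y := by
    funext y; simp [div3, Fin.sum_univ_three]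
  have hdivCD : ContDiff ℝ (⊤ : ℕ∞) (div3 W) := by
    rw [hdiveq]
    exact ((pd_contDiff (hW 0) 0).add (pd_contDiff (hW 1) 1)).add (pd_contDiff (hW 2) 2)
  have hdivW : ∀ (i : Fin 3) (x : E3), pd (div3 W) i x =
      pd (pd (W 0) 0) i x + pd (pd (W 1) 1) i x + pd (pd (W 2) 2) i x := by
    intro i x
    rw [hdiveq, pd_add (f := fun y => pd (W 0) 0 y + pd (W 1) 1 y) ((hd 0 0).add (hd 1 1)) (hd 2 2), pd_add (hd 0 0) (hd 1 1)]
  refine ⟨?_, ?_, ?_⟩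
  · intro i x
    fin_cases i
    · show X 0 x = curl3 (curl3 W) 0 x + -pd (div3 W) 0 x
      have h := hpois 0 x
      rw [Fin.sum_univ_three] at h
      have expand : curl3 (curl3 W) 0 x =
          pd (pd (W 1) 0) 1 x - pd (pd (W 0) 1) 1 x -
            (pd (pd (W 0) 2) 2 x - pd (pd (W 2) 0) 2 x) := by
        show pd (curl3 W 2) 1 x - pd (curl3 W 1) 2 x = _
        rw [c2, c1, pd_sub (hd 1 0) (hd 0 1), pd_sub (hd 0 2) (hd 2 0)]
      rw [expand, hdivW 0 x]
      have s1 := pd_comm (hW 1) 0 1 x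
      have s2 := pd_comm (hW 2) 0 2 x
      linarith
    · show X 1 x = curl3 (curl3 W) 1 x + -pd (div3 W) 1 x
      have h := hpois 1 x
      rw [Fin.sum_univ_three] at h
      have expand : curl3 (curl3 W) 1 x =
          pd (pd (W 2) 1) 2 x - pd (pd (W 1) 2) 2 x -
            (pd (pd (W 1) 0) 0 x - pd (pd (W 0) 1) 0 x) := by
        show pd (curl3 W 0) 2 x - pd (curl3 W 2) 0 x = _
        rw [c0, c2, pd_sub (hd 2 1) (hd 1 2), pd_sub (hd 1 0) (hd 0 1)]
      rw [expand, hdivW 1 x]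
      have s1 := pd_comm (hW 2) 1 2 x
      have s2 := pd_comm (hW 0) 1 0 x
      linarith
    · show X 2 x = curl3 (curl3 W) 2 x + -pd (div3 W) 2 x
      have h := hpois 2 x
      rw [Fin.sum_univ_three] at h
      have expand : curl3 (curl3 W) 2 x =
          pd (pd (W 0) 2) 0 x - pd (pd (W 2) 0) 0 x -
            (pd (pd (W 2) 1) 1 x - pd (pd (W 1) 2) 1 x) := by
        show pd (curl3 W 1) 0 x - pd (curl3 W 0) 1 x = _
        rw [c1, c0, pd_sub (hd 0 2) (hd 2 0), pd_sub (hd 2 1) (hd 1 2)]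
      rw [expand, hdivW 2 x]
      have s1 := pd_comm (hW 0) 2 0 x
      have s2 := pd_comm (hW 1) 2 1 x
      linarith
  · intro x
    have cc0 : curl3 (curl3 W) 0 = fun y => pd (curl3 W 2) 1 y - pd (curl3 W 1) 2 y := rfl
    have cc1 : curl3 (curl3 W) 1 = fun y => pd (curl3 W 0) 2 y - pd (curl3 W 2) 0 y := rfl
    have cc2 : curl3 (curl3 W) 2 = fun y => pd (curl3 W 1) 0 y - pd (curl3 W 0) 1 y := rfl
    have hdveq : div3 (curl3 (curl3 W)) x =
        pd (curl3 (curl3 W) 0) 0 x + pd (curl3 (curl3 W) 1) 1 x +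
          pd (curl3 (curl3 W) 2) 2 x := by
      simp [div3, Fin.sum_univ_three]
    rw [hdveq, cc0, cc1, cc2, pd_sub (hcd 2 1) (hcd 1 2), pd_sub (hcd 0 2) (hcd 2 0),
      pd_sub (hcd 1 0) (hcd 0 1)]
    have s1 := pd_comm (hcCD 2) 1 0 x
    have s2 := pd_comm (hcCD 1) 2 0 x
    have s3 := pd_comm (hcCD 0) 2 1 x
    linarith
  · intro k x
    have hg : ∀ a b : Fin 3, pd (fun y => -(pd (div3 W) a y)) b x = -pd (pd (div3 W) a) b x :=
      fun a b => pd_neg _ b x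
    fin_cases k
    · show pd (fun y => -(pd (div3 W) 2 y)) 1 x - pd (fun y => -(pd (div3 W) 1 y)) 2 x = 0
      rw [hg, hg, pd_comm hdivCD 2 1 x]; ring
    · show pd (fun y => -(pd (div3 W) 0 y)) 2 x - pd (fun y => -(pd (div3 W) 2 y)) 0 x = 0
      rw [hg, hg, pd_comm hdivCD 0 2 x]; ring
    · show pd (fun y => -(pd (div3 W) 1 y)) 0 x - pd (fun y => -(pd (div3 W) 0 y)) 1 x = 0
      rw [hg, hg, pd_comm hdivCD 1 0 x]; ring


end
end

section
/- Let P = (−Δ)⁻¹curl curl denote the Leray projection onto divergence-free vector fields on ℝ³, R_j = |D|⁻¹∂_j the Riesz transforms, and Q_{ij}(u,v) = ∂_iu∂_jv − ∂_ju∂_iv. Then for smooth complex-valued φ (with suitable decay), writing φ = Re φ + i Im φ, one has the identity P(Im(φ̄∇φ))_i = 2R^j|D|⁻¹Q_{ij}(Re φ, Im φ) for i = 1,2,3. -/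
/-!
Write `J = u∇v − v∇u` for the current. A direct computation gives `∂ᵢJⱼ − ∂ⱼJᵢ = 2Qᵢⱼ(u,v)`, so
`Δ(2qᵢⱼ) = ∂ⱼJᵢ − ∂ᵢJⱼ`, while `Δp = div J`. Since partial derivatives commute,
`F = Jᵢ − ∂ᵢp − ∑ⱼ ∂ⱼ(2qᵢⱼ)` then satisfies `ΔF = ΔJᵢ − ∂ᵢ div J − ∑ⱼ ∂ⱼ(∂ⱼJᵢ − ∂ᵢJⱼ) = 0`.
A harmonic Schwartz function vanishes: integrating by parts, `0 = ∫ F ΔF = −∑ᵢ ∫ (∂ᵢF)²`,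
so `F` is constant, and it decays at infinity.
-/

noncomputable section

/-- The Laplacian on `ℝ³`. -/
def lap (f : EuclideanSpace ℝ (Fin 3) → ℝ) (x : EuclideanSpace ℝ (Fin 3)) : ℝ :=
  ∑ i : Fin 3, pd (pd f i) i x

/-- The null forms `Q_{ij}(u,v) = ∂ᵢu ∂ⱼv − ∂ⱼu ∂ᵢv`. -/
def Qform (i j : Fin 3) (u v : EuclideanSpace ℝ (Fin 3) → ℝ)
    (x : EuclideanSpace ℝ (Fin 3)) : ℝ :=
  pd u i x * pd v j x - pd u j x * pd v i x

open LineDeriv Laplacian MeasureTheory SchwartzMap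

namespace SchwartzMap

section Deriv

variable {E F G H : Type*} [NormedAddCommGroup E] [NormedSpace ℝ E]
  [NormedAddCommGroup F] [NormedSpace ℝ F] [NormedAddCommGroup G] [NormedSpace ℝ G]
  [NormedAddCommGroup H] [NormedSpace ℝ H]

theorem lineDerivOp_lineDerivOp_apply (f : 𝓢(E, F)) (v w x : E) :
    ∂_{v} (∂_{w} f) x = fderiv ℝ (fderiv ℝ f) x v w := by
  have hw : ⇑(∂_{w} f : 𝓢(E, F)) = fun y => fderiv ℝ f y w :=
    funext (lineDerivOp_apply_eq_fderiv w f)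
  have hdiff : DifferentiableAt ℝ (fderiv ℝ f) x := (fderivCLM ℝ E F f).differentiableAt
  rw [lineDerivOp_apply_eq_fderiv, hw, fderiv_clm_apply hdiff (differentiableAt_const w)]
  simp

theorem lineDerivOp_comm (f : 𝓢(E, F)) (v w : E) : ∂_{v} (∂_{w} f) = ∂_{w} (∂_{v} f) := by
  ext x
  rw [lineDerivOp_lineDerivOp_apply, lineDerivOp_lineDerivOp_apply]
  exact (f.smooth 2).contDiffAt.isSymmSndFDerivAt (by simp) v w

theorem lineDerivOp_pairing (B : F →L[ℝ] G →L[ℝ] H) (f : 𝓢(E, F)) (g : 𝓢(E, G)) (v : E) :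
    ∂_{v} (pairing B f g) = pairing B (∂_{v} f) g + pairing B f (∂_{v} g) := by
  ext x
  simp only [lineDerivOp_apply_eq_fderiv, add_apply, pairing_apply_apply]
  rw [pairing_apply, (B.hasFDerivAt_of_bilinear (f.hasFDerivAt x) (g.hasFDerivAt x)).fderiv]
  simp [add_comm]

theorem eq_zero_of_lineDerivOp_eq_zero [Nontrivial E] [ProperSpace E] {ι : Type*}
    (b : Module.Basis ι ℝ E) {f : 𝓢(E, F)} (h : ∀ i, ∂_{b i} f = 0) : f = 0 := by
  have hf' (x : E) : fderiv ℝ f x = 0 :=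
    ContinuousLinearMap.coe_injective <| b.ext fun i => by
      simpa [lineDerivOp_apply_eq_fderiv] using congr($(h i) x)
  have hconst : ⇑f = fun _ => f 0 :=
    funext fun x => is_const_of_fderiv_eq_zero f.differentiable hf' x 0
  have hlim := f.tendsto_cocompact
  rw [hconst, tendsto_const_nhds_iff] at hlim
  ext x
  rw [hconst, hlim, zero_apply]

end Deriv

section Laplacian

variable {ι E F : Type*} [Fintype ι] [NormedAddCommGroup E] [InnerProductSpace ℝ E]
  [FiniteDimensional ℝ E] [NormedAddCommGroup F] [NormedSpace ℝ F]

theorem laplacian_lineDerivOp (f : 𝓢(E, F)) (v : E) : Δ (∂_{v} f) = ∂_{v} (Δ f) := by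
  simp only [laplacian_eq_sum (stdOrthonormalBasis ℝ E), lineDerivOp_sum, lineDerivOp_comm _ v]

theorem integral_mul_laplacian_self [MeasurableSpace E] [BorelSpace E] (μ : Measure E)
    [μ.IsAddHaarMeasure] (b : OrthonormalBasis ι ℝ E) (f : 𝓢(E, ℝ)) :
    ∫ x, f x * Δ f x ∂μ = -∑ i, ∫ x, ∂_{b i} f x ^ 2 ∂μ := by
  have hint (g : 𝓢(E, ℝ)) : Integrable (fun x => f x * g x) μ :=
    (pairing (ContinuousLinearMap.mul ℝ ℝ) f g).integrable
  simp only [laplacian_eq_sum b, sum_apply, Finset.mul_sum]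
  rw [integral_finsetSum _ fun i _ => hint _, ← Finset.sum_neg_distrib]
  refine Finset.sum_congr rfl fun i _ => ?_
  rw [integral_mul_lineDerivOp_right_eq_neg_left]
  simp only [sq]

theorem eq_zero_of_laplacian_eq_zero [Nontrivial E] {f : 𝓢(E, ℝ)} (h : Δ f = 0) : f = 0 := by
  borelize E
  let b := stdOrthonormalBasis ℝ E
  have henergy := integral_mul_laplacian_self Measure.addHaar b f
  simp only [h, zero_apply, mul_zero, integral_zero, zero_eq_neg] at henergy
  refine eq_zero_of_lineDerivOp_eq_zero b.toBasis fun i => ?_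
  have hi : ∫ x, ∂_{b i} f x ^ 2 ∂Measure.addHaar = 0 :=
    (Finset.sum_eq_zero_iff_of_nonneg fun i _ => integral_nonneg fun x => sq_nonneg _).1
      henergy i (Finset.mem_univ i)
  have hint : Integrable (fun x => ∂_{b i} f x * ∂_{b i} f x) Measure.addHaar :=
    (pairing (ContinuousLinearMap.mul ℝ ℝ) (∂_{b i} f) (∂_{b i} f)).integrable
  simp only [← sq] at hint
  rw [integral_eq_zero_iff_of_nonneg (fun x => sq_nonneg _) hint,
    Continuous.ae_eq_iff_eq _ ((∂_{b i} f).continuous.pow 2) continuous_zero] at hi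
  ext x
  simpa using congr_fun hi x

theorem sub_lineDerivOp_eq_sum_of_laplacian_eq [Nontrivial E] (b : OrthonormalBasis ι ℝ E)
    (J : ι → 𝓢(E, ℝ)) (p : 𝓢(E, ℝ)) (r : ι → ι → 𝓢(E, ℝ))
    (hp : Δ p = ∑ j, ∂_{b j} (J j)) (hr : ∀ i j, Δ (r i j) = ∂_{b j} (J i) - ∂_{b i} (J j))
    (i : ι) : J i - ∂_{b i} p = ∑ j, ∂_{b j} (r i j) := by
  rw [← sub_eq_zero]
  apply eq_zero_of_laplacian_eq_zero
  simp only [← laplacianCLM_eq', map_sub, map_sum]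
  simp only [laplacianCLM_eq', laplacian_lineDerivOp, hp, hr, laplacian_eq_sum b (J i),
    sub_eq_add_neg, lineDerivOp_sum, lineDerivOp_add, lineDerivOp_neg, Finset.sum_add_distrib,
    Finset.sum_neg_distrib, lineDerivOp_comm _ (b i)]
  abel

end Laplacian

section Current

variable {E : Type*} [NormedAddCommGroup E] [NormedSpace ℝ E]

/-- `Im(φ̄ ∂ₘφ)` for `φ = u + iv`. -/
def current (u v : 𝓢(E, ℝ)) (m : E) : 𝓢(E, ℝ) :=
  pairing (ContinuousLinearMap.mul ℝ ℝ) u (∂_{m} v) -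
    pairing (ContinuousLinearMap.mul ℝ ℝ) v (∂_{m} u)

def nullForm (u v : 𝓢(E, ℝ)) (m n : E) : 𝓢(E, ℝ) :=
  pairing (ContinuousLinearMap.mul ℝ ℝ) (∂_{m} u) (∂_{n} v) -
    pairing (ContinuousLinearMap.mul ℝ ℝ) (∂_{n} u) (∂_{m} v)

@[simp]
theorem current_apply (u v : 𝓢(E, ℝ)) (m x : E) :
    current u v m x = u x * ∂_{m} v x - v x * ∂_{m} u x :=
  rfl

@[simp]
theorem nullForm_apply (u v : 𝓢(E, ℝ)) (m n x : E) :
    nullForm u v m n x = ∂_{m} u x * ∂_{n} v x - ∂_{n} u x * ∂_{m} v x :=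
  rfl

theorem lineDerivOp_current_sub_lineDerivOp_current (u v : 𝓢(E, ℝ)) (m n : E) :
    ∂_{m} (current u v n) - ∂_{n} (current u v m) = (2 : ℝ) • nullForm u v m n := by
  ext x
  simp only [current, sub_eq_add_neg, lineDerivOp_add, lineDerivOp_neg, lineDerivOp_pairing,
    lineDerivOp_comm u n m, lineDerivOp_comm v n m, add_apply, neg_apply, smul_apply,
    pairing_apply_apply, nullForm_apply, ContinuousLinearMap.mul_apply', smul_eq_mul]
  ring

end Current

end SchwartzMap

section Euclidean3

local notation "ℝ³" => EuclideanSpace ℝ (Fin 3)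
local notation "e" => EuclideanSpace.basisFun (Fin 3) ℝ

theorem pd_eq_lineDerivOp (f : 𝓢(ℝ³, ℝ)) (i : Fin 3) : pd f i = ⇑(∂_{e i} f : 𝓢(ℝ³, ℝ)) := by
  ext x
  rw [pd, lineDerivOp_apply_eq_fderiv, EuclideanSpace.basisFun_apply]

theorem lap_eq_laplacian (f : 𝓢(ℝ³, ℝ)) : lap f = ⇑(Δ f : 𝓢(ℝ³, ℝ)) := by
  ext x
  simp only [lap, pd_eq_lineDerivOp, laplacian_eq_sum e, sum_apply]

-- `p = Δ⁻¹ div J` and `qᵢⱼ = (−Δ)⁻¹Qᵢⱼ(u,v)` enter through the Poisson equations they solve;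
-- `J − ∇p` is then the Leray projection `PJ`, and `∑ⱼ ∂ⱼ qᵢⱼ = Rʲ|D|⁻¹Qᵢⱼ(u,v)`.
/-- Null structure of the divergence-free part of the current.
Write `φ = u + iv`, so the current is `f_i = Im(φ̄∂ᵢφ) = u∂ᵢv − v∂ᵢu`.  Let
`p = Δ⁻¹ div f` (so `f − ∇p = Pf` is the Leray projection of `f`) and
`q_{ij} = (−Δ)⁻¹Q_{ij}(u,v) = |D|⁻²Q_{ij}(u,v)`, all Schwartz.  Then
`P(Im(φ̄∇φ))_i = 2R^j|D|⁻¹Q_{ij}(u,v)`, i.e. `f_i − ∂ᵢp = 2∑_j ∂ⱼ q_{ij}`. -/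
theorem stmt_12 (u v : SchwartzMap (EuclideanSpace ℝ (Fin 3)) ℝ)
    (p : SchwartzMap (EuclideanSpace ℝ (Fin 3)) ℝ)
    (q : Fin 3 → Fin 3 → SchwartzMap (EuclideanSpace ℝ (Fin 3)) ℝ)
    (hp : ∀ x, lap (⇑p) x =
      ∑ j : Fin 3, pd (fun y => u y * pd (⇑v) j y - v y * pd (⇑u) j y) j x)
    (hq : ∀ i j x, -(lap (⇑(q i j)) x) = Qform i j (⇑u) (⇑v) x) :
    ∀ (i : Fin 3) x,
      (u x * pd (⇑v) i x - v x * pd (⇑u) i x) - pd (⇑p) i x =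
        2 * ∑ j : Fin 3, pd (⇑(q i j)) j x := by
  intro i x
  have hcurrent (j : Fin 3) :
      (fun y => u y * pd v j y - v y * pd u j y) = ⇑(current u v (e j)) := by
    ext y
    simp [pd_eq_lineDerivOp]
  have hdiv : Δ p = ∑ j, ∂_{e j} (current u v (e j)) := by
    ext y
    have hpy := hp y
    simp only [hcurrent] at hpy
    simpa [lap_eq_laplacian, pd_eq_lineDerivOp] using hpy
  have hcurl (i j : Fin 3) :
      Δ ((2 : ℝ) • q i j) = ∂_{e j} (current u v (e i)) - ∂_{e i} (current u v (e j)) := by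
    rw [← neg_sub, lineDerivOp_current_sub_lineDerivOp_current, ← laplacianCLM_eq', map_smul,
      laplacianCLM_eq', ← smul_neg]
    congr 1
    ext y
    simpa [lap_eq_laplacian, Qform, pd_eq_lineDerivOp, neg_eq_iff_eq_neg] using hq i j y
  have hleray := congr($(sub_lineDerivOp_eq_sum_of_laplacian_eq e _ p _ hdiv hcurl i) x)
  simpa [pd_eq_lineDerivOp, lineDerivOp_smul, Finset.mul_sum] using hleray

end Euclidean3

end
end

section
/- Let A^{df} be a smooth divergence-free vector field on ℝ³ and φ a smooth scalar (with suitable decay). Then 2A^{df}·∇φ = Q_{ij}(φ, |D|⁻¹[R^iA^j − R^jA^i]) (summation over i,j), where Q_{ij}(u,v) = ∂_iu∂_jv − ∂_ju∂_iv, R_i = |D|⁻¹∂_i are the Riesz transforms, and A^j denote the components of A^{df}. -/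
noncomputable section

/-- Partial derivative `∂ᵢ f` on `ℝ³` (complex-valued). -/
def pdC (f : EuclideanSpace ℝ (Fin 3) → ℂ) (i : Fin 3) (x : EuclideanSpace ℝ (Fin 3)) : ℂ :=
  fderiv ℝ f x (EuclideanSpace.single i 1)

section Helpers

set_option maxHeartbeats 1000000

open SchwartzMap MeasureTheory Real Complex
open scoped FourierTransform RealInnerProductSpace

local notation "E3" => EuclideanSpace ℝ (Fin 3)

/-- A Schwartz function on `ℝ³` (complex-valued) that is harmonic vanishes. -/
lemma harmonicC_zero (F : SchwartzMap (EuclideanSpace ℝ (Fin 3)) ℂ)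
    (hF : ∀ x, ∑ i : Fin 3, pdC (pdC ⇑F i) i x = 0) : F = 0 := by
  set e : Fin 3 → E3 := fun i => EuclideanSpace.single i 1 with he
  set F1 : SchwartzMap E3 (E3 →L[ℝ] ℂ) := SchwartzMap.fderivCLM ℝ E3 ℂ F with hF1
  set F2 : SchwartzMap E3 (E3 →L[ℝ] (E3 →L[ℝ] ℂ)) := SchwartzMap.fderivCLM ℝ E3 (E3 →L[ℝ] ℂ) F1 with hF2
  have hc1 : ⇑F1 = fderiv ℝ ⇑F := funext fun x => SchwartzMap.fderivCLM_apply ℝ F x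
  have hc2 : ⇑F2 = fderiv ℝ ⇑F1 := funext fun x => SchwartzMap.fderivCLM_apply ℝ F1 x
  have hdiffF1 : Differentiable ℝ ⇑F1 := F1.differentiable
  have key : ∀ x i, (F2 x) (e i) (e i) = pdC (pdC ⇑F i) i x := by
    intro x i
    have h1 : pdC ⇑F i = fun y => F1 y (e i) := by
      funext y; simp [pdC, hc1, he]
    rw [h1]
    have : pdC (fun y => F1 y (e i)) i x
        = fderiv ℝ (fun y => F1 y (e i)) x (e i) := rfl
    rw [this, fderiv_clm_apply (hdiffF1 x) (differentiableAt_const _)]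
    simp [hc2]
  have hFT1 : 𝓕 (fderiv ℝ ⇑F) = VectorFourier.fourierSMulRight (-innerSL ℝ) (𝓕 ⇑F) :=
    Real.fourier_fderiv F.integrable (F.differentiable)
      (hc1 ▸ F1.integrable)
  have hFT2 : 𝓕 (fderiv ℝ ⇑F1) = VectorFourier.fourierSMulRight (-innerSL ℝ) (𝓕 ⇑F1) :=
    Real.fourier_fderiv F1.integrable (F1.differentiable)
      (hc2 ▸ F2.integrable)
  have main : ∀ ξ : E3, ξ ≠ 0 → 𝓕 ⇑F ξ = 0 := by
    intro ξ hξ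
    have hsum0 : ∑ i : Fin 3, 𝓕 (fun x => F2 x (e i) (e i)) ξ = 0 := by
      have hint : ∀ i : Fin 3, Integrable (fun x => F2 x (e i) (e i)) := by
        intro i
        exact (SchwartzMap.evalCLM ℝ E3 ℂ (e i)
          ((SchwartzMap.evalCLM ℝ E3 (E3 →L[ℝ] ℂ) (e i)) F2)).integrable
      have : ∀ i : Fin 3, 𝓕 (fun x => F2 x (e i) (e i)) ξ
          = ∫ x : E3, 𝐞 (-⟪x, ξ⟫) • (F2 x (e i) (e i)) := fun i =>
        Real.fourier_eq _ _
      simp_rw [this]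
      rw [← integral_finset_sum]
      · have : ∀ x : E3, ∑ i : Fin 3, 𝐞 (-⟪x, ξ⟫) • (F2 x (e i) (e i)) = 0 := by
          intro x
          rw [← Finset.smul_sum]
          have : ∑ i : Fin 3, F2 x (e i) (e i) = 0 := by
            simp_rw [key]; exact hF x
          rw [this, smul_zero]
        simp_rw [this]
        exact integral_zero _ _
      · intro i _
        exact (Real.fourierIntegral_convergent_iff ξ).2 (hint i)
    have heval : ∀ i : Fin 3, 𝓕 (fun x => F2 x (e i) (e i)) ξ
        = ((-(2 * π * Complex.I)) * (-(ξ i : ℂ)))^2 * 𝓕 ⇑F ξ := by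
      intro i
      have hint2 : Integrable (fun x => F2 x (e i)) :=
        ((SchwartzMap.evalCLM ℝ E3 (E3 →L[ℝ] ℂ) (e i)) F2).integrable
      rw [← Real.fourier_continuousLinearMap_apply hint2,
          ← Real.fourier_continuousLinearMap_apply F2.integrable]
      have e2 : ⇑F2 = fderiv ℝ ⇑F1 := hc2
      rw [e2, hFT2]
      have hF1F : 𝓕 ⇑F1 ξ = VectorFourier.fourierSMulRight (-innerSL ℝ) (𝓕 ⇑F) ξ := by
        rw [hc1, hFT1]
      simp only [ContinuousLinearMap.smul_apply, ContinuousLinearMap.neg_apply, hF1F,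
        VectorFourier.fourierSMulRight_apply, innerSL_apply_apply]
      have hip : innerSL ℝ ξ (e i) = ξ i := by
        simp [he, PiLp.inner_apply, EuclideanSpace.single_apply]
      rw [hip]
      push_cast [Complex.real_smul, smul_eq_mul]
      ring
    have hc : ((-(2 * π * Complex.I))^2 * ∑ i : Fin 3, ((ξ i : ℂ))^2) * 𝓕 ⇑F ξ = 0 := by
      rw [← hsum0]
      simp_rw [heval]
      rw [← Finset.sum_mul]
      congr 1
      rw [Finset.mul_sum]
      exact Finset.sum_congr rfl fun i _ => by ring
    have hfac : ((-(2 * π * Complex.I))^2 * ∑ i : Fin 3, ((ξ i : ℂ))^2) ≠ 0 := by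
      apply mul_ne_zero
      · apply pow_ne_zero
        simp [Real.pi_ne_zero, Complex.I_ne_zero]
      · have h1 : ∑ i : Fin 3, ((ξ i : ℂ))^2 = ((∑ i : Fin 3, (ξ i)^2 : ℝ) : ℂ) := by
          push_cast; rfl
        rw [h1, Ne, Complex.ofReal_eq_zero]
        have hex : ∃ i, ξ i ≠ 0 := by
          by_contra hcon; push_neg at hcon
          exact hξ (by ext i; exact hcon i)
        obtain ⟨i0, hi0⟩ := hex
        have hpos : 0 < ∑ i : Fin 3, (ξ i)^2 :=
          Finset.sum_pos' (fun i _ => sq_nonneg _) ⟨i0, Finset.mem_univ _, by positivity⟩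
        exact ne_of_gt hpos
    exact (mul_eq_zero.1 hc).resolve_left hfac
  have hG : ⇑(FourierTransform.fourierCLE ℂ (SchwartzMap E3 ℂ) F) = fun _ : E3 => (0 : ℂ) := by
    apply Continuous.ext_on (dense_compl_singleton (0 : E3))
      (FourierTransform.fourierCLE ℂ (SchwartzMap E3 ℂ) F).continuous continuous_const
    intro ξ hξ
    rw [FourierTransform.fourierCLE_apply, SchwartzMap.fourier_coe]
    exact main ξ hξ
  have h0 : FourierTransform.fourierCLE ℂ (SchwartzMap E3 ℂ) F = 0 := by
    ext x
    rw [hG]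
    simp
  exact (FourierTransform.fourierCLE ℂ (SchwartzMap E3 ℂ)).injective (by rw [h0, map_zero])

lemma pdC_ofReal (g : EuclideanSpace ℝ (Fin 3) → ℝ) (hg : Differentiable ℝ g) (i : Fin 3)
    (x : EuclideanSpace ℝ (Fin 3)) :
    pdC (fun y => (g y : ℂ)) i x = (pd g i x : ℂ) := by
  have h : HasFDerivAt (fun y => ((g y : ℝ) : ℂ)) (Complex.ofRealCLM.comp (fderiv ℝ g x)) x :=
    Complex.ofRealCLM.hasFDerivAt.comp x (hg x).hasFDerivAt
  rw [pdC, h.fderiv]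
  rfl

/-- Partial derivative as an operator on Schwartz space. -/
def Dop (i : Fin 3) : SchwartzMap (EuclideanSpace ℝ (Fin 3)) ℝ →L[ℝ]
    SchwartzMap (EuclideanSpace ℝ (Fin 3)) ℝ :=
  LineDeriv.lineDerivOpCLM ℝ (SchwartzMap (EuclideanSpace ℝ (Fin 3)) ℝ) (EuclideanSpace.single i (1 : ℝ))

lemma pd_coe (f : SchwartzMap (EuclideanSpace ℝ (Fin 3)) ℝ) (i : Fin 3) :
    pd ⇑f i = ⇑(Dop i f) :=
  funext fun x => (SchwartzMap.lineDerivOp_apply_eq_fderiv (EuclideanSpace.single i 1) f x).symm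

lemma schwartz_sum_apply {ι : Type*} (s : Finset ι)
    (g : ι → SchwartzMap (EuclideanSpace ℝ (Fin 3)) ℝ) (x : EuclideanSpace ℝ (Fin 3)) :
    (∑ i ∈ s, g i) x = ∑ i ∈ s, g i x := by
  have h : ⇑(∑ i ∈ s, g i) = ∑ i ∈ s, ⇑(g i) := map_sum (FunLike.coeAddMonoidHom (SchwartzMap E3 ℝ) E3 ℝ) g s
  rw [h, Finset.sum_apply]

/-- A real-valued harmonic Schwartz function on `ℝ³` vanishes. -/
lemma harmonicR_zero (f : SchwartzMap (EuclideanSpace ℝ (Fin 3)) ℝ)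
    (hf : ∀ x, ∑ i : Fin 3, pd (pd ⇑f i) i x = 0) : f = 0 := by
  set F : SchwartzMap E3 ℂ := SchwartzMap.bilinLeftCLM
    (ContinuousLinearMap.lsmul ℝ ℝ : ℝ →L[ℝ] ℂ →L[ℝ] ℂ)
    (Function.HasTemperateGrowth.const (1 : ℂ)) f with hFdef
  have hFc : ⇑F = fun y => ((f y : ℝ) : ℂ) := by
    funext y
    show (f y) • (1 : ℂ) = _
    simp [Complex.real_smul]
  have hF0 : F = 0 := by
    apply harmonicC_zero
    intro x
    rw [hFc]
    have h1 : ∀ i : Fin 3, pdC (fun y => ((f y : ℝ) : ℂ)) i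
        = fun z => ((pd ⇑f i z : ℝ) : ℂ) := by
      intro i; funext z
      exact pdC_ofReal ⇑f f.differentiable i z
    simp_rw [h1]
    have h2 : ∀ i : Fin 3, ∀ z : E3, pdC (fun z => ((pd ⇑f i z : ℝ) : ℂ)) i z
        = ((pd (pd ⇑f i) i z : ℝ) : ℂ) := by
      intro i z
      apply pdC_ofReal
      rw [pd_coe]
      exact (Dop i f).differentiable
    simp_rw [h2]
    exact_mod_cast congrArg (fun r : ℝ => (r : ℂ)) (hf x)
  ext x
  have hx : ((f x : ℝ) : ℂ) = 0 := by
    rw [← congrFun hFc x, hF0]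
    simp
  exact_mod_cast hx

lemma pd_pd (f : SchwartzMap (EuclideanSpace ℝ (Fin 3)) ℝ) (i j : Fin 3)
    (x : EuclideanSpace ℝ (Fin 3)) :
    pd (pd ⇑f i) j x = fderiv ℝ (fderiv ℝ ⇑f) x (EuclideanSpace.single j 1)
      (EuclideanSpace.single i 1) := by
  have hcoe : fderiv ℝ ⇑f = ⇑(SchwartzMap.fderivCLM ℝ E3 ℝ f) :=
    funext fun y => (SchwartzMap.fderivCLM_apply ℝ f y).symm
  have hdiff : DifferentiableAt ℝ (fderiv ℝ ⇑f) x := by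
    rw [hcoe]; exact (SchwartzMap.fderivCLM ℝ E3 ℝ f).differentiableAt
  have h1 : pd ⇑f i = fun y => fderiv ℝ ⇑f y (EuclideanSpace.single i 1) := rfl
  rw [pd, h1, fderiv_clm_apply hdiff (differentiableAt_const _)]
  simp

lemma Dop_comm (i j : Fin 3) (f : SchwartzMap (EuclideanSpace ℝ (Fin 3)) ℝ) :
    Dop i (Dop j f) = Dop j (Dop i f) := by
  have hcoe : fderiv ℝ ⇑f = ⇑(SchwartzMap.fderivCLM ℝ E3 ℝ f) :=
    funext fun y => (SchwartzMap.fderivCLM_apply ℝ f y).symm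
  ext x
  have key : ∀ k l : Fin 3, Dop k (Dop l f) x
      = fderiv ℝ (fderiv ℝ ⇑f) x (EuclideanSpace.single k 1) (EuclideanSpace.single l 1) := by
    intro k l
    have h0 : Dop k (Dop l f) x = pd (pd ⇑f l) k x := by
      rw [← pd_coe, ← pd_coe]
    rw [h0, pd_pd]
  rw [key i j, key j i]
  have hf' : ∀ y, HasFDerivAt ⇑f (fderiv ℝ ⇑f y) y := fun y =>
    f.differentiableAt.hasFDerivAt
  have hx : HasFDerivAt (fderiv ℝ ⇑f) (fderiv ℝ (fderiv ℝ ⇑f) x) x := by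
    have : DifferentiableAt ℝ (fderiv ℝ ⇑f) x := by
      rw [hcoe]; exact (SchwartzMap.fderivCLM ℝ E3 ℝ f).differentiableAt
    exact this.hasFDerivAt
  exact second_derivative_symmetric hf' hx _ _

end Helpers

/-- Null structure of `2A^{df}·∇φ`.  Let `A` be a Schwartz
divergence-free vector field on `ℝ³` and `φ` smooth.  Let
`w_{ij} = |D|⁻¹[RⁱAʲ − RʲAⁱ] = (−Δ)⁻¹(∂ᵢAⱼ − ∂ⱼAᵢ)` (Schwartz, antisymmetric).  Then
`2A^{df}·∇φ = Q_{ij}(φ, w_{ij})` (summation over `i, j`), where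
`Q_{ij}(u,v) = ∂ᵢu∂ⱼv − ∂ⱼu∂ᵢv`. -/
theorem stmt_13 (A : Fin 3 → SchwartzMap (EuclideanSpace ℝ (Fin 3)) ℝ)
    (φ : EuclideanSpace ℝ (Fin 3) → ℂ) (hφ : ContDiff ℝ (⊤ : ℕ∞) φ)
    (hdiv : ∀ x, ∑ i : Fin 3, pd (⇑(A i)) i x = 0)
    (w : Fin 3 → Fin 3 → SchwartzMap (EuclideanSpace ℝ (Fin 3)) ℝ)
    (hanti : ∀ i j x, w i j x = -(w j i x))
    (hw : ∀ i j x, -(lap (⇑(w i j)) x) = pd (⇑(A j)) i x - pd (⇑(A i)) j x) :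
    ∀ x, 2 * ∑ i : Fin 3, ((A i x : ℂ) * pdC φ i x) =
      ∑ i : Fin 3, ∑ j : Fin 3,
        (pdC φ i x * (pd (⇑(w i j)) j x : ℂ) - pdC φ j x * (pd (⇑(w i j)) i x : ℂ)) := by
  have hDapply : ∀ (u : SchwartzMap (EuclideanSpace ℝ (Fin 3)) ℝ) (k : Fin 3) x,
      Dop k u x = pd ⇑u k x := fun u k x => (congrFun (pd_coe u k) x).symm
  have hdiv' : (∑ i : Fin 3, Dop i (A i)) = 0 := by
    ext x
    rw [schwartz_sum_apply]
    simp_rw [hDapply]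
    rw [hdiv x]
    rfl
  have hDD : ∀ (u : SchwartzMap (EuclideanSpace ℝ (Fin 3)) ℝ) (k : Fin 3) x,
      (Dop k (Dop k u)) x = pd (pd ⇑u k) k x := by
    intro u k x
    rw [hDapply, pd_coe u k]
  have hw' : ∀ i j, (∑ k : Fin 3, Dop k (Dop k (w i j))) = Dop j (A i) - Dop i (A j) := by
    intro i j
    ext x
    rw [schwartz_sum_apply]
    simp_rw [hDD]
    have hl : lap ⇑(w i j) x = ∑ k : Fin 3, pd (pd ⇑(w i j) k) k x := rfl
    have h1 : ∑ k : Fin 3, pd (pd ⇑(w i j) k) k x = pd ⇑(A i) j x - pd ⇑(A j) i x := by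
      have h0 := hw i j x
      rw [hl] at h0
      linarith
    rw [h1, SchwartzMap.sub_apply, hDapply, hDapply]
  set g : Fin 3 → SchwartzMap (EuclideanSpace ℝ (Fin 3)) ℝ :=
    fun i => (∑ j : Fin 3, Dop j (w i j)) - A i with hgdef
  have hS : ∀ i, (∑ k : Fin 3, Dop k (Dop k (g i))) = 0 := by
    intro i
    have e1 : ∀ k : Fin 3, Dop k (Dop k (g i))
        = (∑ j : Fin 3, Dop k (Dop k (Dop j (w i j)))) - Dop k (Dop k (A i)) := by
      intro k
      rw [hgdef]
      simp only [map_sub, map_sum]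
    calc (∑ k : Fin 3, Dop k (Dop k (g i)))
        = (∑ k : Fin 3, ∑ j : Fin 3, Dop k (Dop k (Dop j (w i j))))
            - ∑ k : Fin 3, Dop k (Dop k (A i)) := by
          rw [← Finset.sum_sub_distrib]
          exact Finset.sum_congr rfl fun k _ => e1 k
      _ = (∑ j : Fin 3, Dop j (∑ k : Fin 3, Dop k (Dop k (w i j))))
            - ∑ k : Fin 3, Dop k (Dop k (A i)) := by
          rw [Finset.sum_comm]
          congr 1
          refine Finset.sum_congr rfl fun j _ => ?_
          rw [map_sum]
          refine Finset.sum_congr rfl fun k _ => ?_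
          rw [congrArg (Dop k) (Dop_comm k j (w i j)), Dop_comm k j (Dop k (w i j))]
      _ = (∑ j : Fin 3, Dop j (Dop j (A i) - Dop i (A j)))
            - ∑ k : Fin 3, Dop k (Dop k (A i)) := by
          simp_rw [hw']
      _ = 0 := by
          have h3 : ∑ j : Fin 3, Dop j (Dop i (A j)) = 0 := by
            have hcc : ∀ j : Fin 3, Dop j (Dop i (A j)) = Dop i (Dop j (A j)) := fun j =>
              Dop_comm j i (A j)
            simp_rw [hcc]
            rw [← map_sum, hdiv', map_zero]
          simp_rw [map_sub]
          rw [Finset.sum_sub_distrib, h3]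
          abel
  have hg0 : ∀ i, g i = 0 := by
    intro i
    apply harmonicR_zero
    intro x
    have hps : ∑ k : Fin 3, pd (pd ⇑(g i) k) k x = (∑ k : Fin 3, Dop k (Dop k (g i))) x := by
      rw [schwartz_sum_apply]
      exact Finset.sum_congr rfl fun k _ => (hDD (g i) k x).symm
    rw [hps, hS i]
    simp
  have hA : ∀ i x, ∑ j : Fin 3, pd ⇑(w i j) j x = A i x := by
    intro i x
    have h4 : (∑ j : Fin 3, Dop j (w i j)) = A i := by
      have h5 := hg0 i
      rw [hgdef] at h5
      exact sub_eq_zero.mp h5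
    have h6 := congrArg (fun u : SchwartzMap (EuclideanSpace ℝ (Fin 3)) ℝ => u x) h4
    rw [schwartz_sum_apply] at h6
    simp_rw [hDapply] at h6
    exact h6
  have hanti' : ∀ i j : Fin 3, ∀ x, pd ⇑(w j i) j x = -(pd ⇑(w i j) j x) := by
    intro i j x
    have hww : w j i = -(w i j) := by
      ext y
      rw [hanti j i y]
      rfl
    calc pd ⇑(w j i) j x = Dop j (w j i) x := (hDapply _ j x).symm
      _ = (-(Dop j (w i j))) x := by rw [hww, map_neg]
      _ = -(Dop j (w i j) x) := rfl
      _ = -(pd ⇑(w i j) j x) := by rw [hDapply]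
  intro x
  have expand : ∑ i : Fin 3, ∑ j : Fin 3,
        (pdC φ i x * (pd ⇑(w i j) j x : ℂ) - pdC φ j x * (pd ⇑(w i j) i x : ℂ))
      = (∑ i : Fin 3, ∑ j : Fin 3, pdC φ i x * (pd ⇑(w i j) j x : ℂ))
        - ∑ i : Fin 3, ∑ j : Fin 3, pdC φ j x * (pd ⇑(w i j) i x : ℂ) := by
    rw [← Finset.sum_sub_distrib]
    exact Finset.sum_congr rfl fun i _ => Finset.sum_sub_distrib _ _
  have hterm : ∀ a b : Fin 3, pdC φ a x * (pd ⇑(w b a) b x : ℂ)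
      = -(pdC φ a x * (pd ⇑(w a b) b x : ℂ)) := by
    intro a b
    rw [hanti' a b x]
    push_cast
    ring
  have hsecond : ∑ i : Fin 3, ∑ j : Fin 3, pdC φ j x * (pd ⇑(w i j) i x : ℂ)
      = - ∑ i : Fin 3, ∑ j : Fin 3, pdC φ i x * (pd ⇑(w i j) j x : ℂ) := by
    rw [Finset.sum_comm]
    simp_rw [hterm, Finset.sum_neg_distrib]
  rw [expand, hsecond, sub_neg_eq_add]
  have hSsum : ∀ i : Fin 3, ∑ j : Fin 3, pdC φ i x * (pd ⇑(w i j) j x : ℂ)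
      = pdC φ i x * (A i x : ℂ) := by
    intro i
    rw [← Finset.mul_sum]
    congr 1
    rw [← hA i x]
    push_cast
    rfl
  simp_rw [hSsum]
  rw [two_mul]
  congr 1 <;> exact Finset.sum_congr rfl fun i _ => mul_comm _ _

end
end
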